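/- Let s ∈ (0, 1], λ > 0, σ ≥ 0 and d ≥ 1. For f with finite norm ‖f‖² = Σ_{k∈ℤ^d} ∫_{ℝ^d} ⟨|k|+|η|⟩^{2σ} e^{2λ⟨|k|+|η|⟩^s} |f̂_k(η)|² dη and h(t) with ‖h‖² = Σ_{k∈ℤ^d} ⟨|k|+|kt|⟩^{2σ} e^{2λ⟨|k|+|kt|⟩^s} |ĥ_k|², where σ > d/2, there is a constant C = C(λ, σ, s, d) such that Σ_{k∈ℤ^d} ∫_{ℝ^d} |Σ_{ℓ∈ℤ^d} ⟨|k|+|η|⟩^σ e^{λ⟨|k|+|η|⟩^s} ĥ_ℓ f̂_{k-ℓ}(η - ℓt)|² dη ≤ C·‖h‖²·‖f‖². -/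

import Mathlib

/-!
For `|k| + |η| ≤ (|ℓ| + |ℓt|) + (|k - ℓ| + |η - ℓt|)` the weight `⟨x⟩^σ e^{λ⟨x⟩^s}` at `(k, η)`
is at most `2^σ (⟨|ℓ|⟩^{-σ} + ⟨|k - ℓ|⟩^{-σ})` times the product of the weights at `(ℓ, ℓt)` and
`(k - ℓ, η - ℓt)`: the exponential factor splits because `x ↦ x^s` is subadditive for `s ≤ 1`,
and `(a + b)^σ ≤ 2^σ (a^σ + b^σ) = 2^σ (a^{-σ} + b^{-σ}) a^σ b^σ`. Cauchy–Schwarz in `ℓ` then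
bounds the square of the weighted product at `(k, η)` by `4^{σ+1} ∑_m ⟨|m|⟩^{-2σ}`, finite since
`2σ > d`, times `∑_ℓ |weighted ĥ_ℓ|² |weighted f̂_{k-ℓ}(η - ℓt)|²`. Summed over `k` and integrated
in `η`, the latter factors into `‖h‖² ‖f‖²` by Tonelli and translation invariance. The estimate
is proved in `ℝ≥0∞`, where Tonelli needs no summability, for an arbitrary shift `ℓ ↦ θ ℓ` in place
of `ℓt`.
-/

open MeasureTheory

/-- Japanese bracket. -/
noncomputable def jb (x : ℝ) : ℝ := Real.sqrt (1 + x ^ 2)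

/-- ℓ¹ norm on ℝ^d. -/
noncomputable def rnorm {d : ℕ} (v : Fin d → ℝ) : ℝ := ∑ i, |v i|

/-- ℓ¹ norm of an integer frequency vector. -/
noncomputable def znorm {d : ℕ} (k : Fin d → ℤ) : ℝ := ∑ i, |(k i : ℝ)|

/-- Gevrey weight `⟨|k|+|η|⟩^σ e^{λ⟨|k|+|η|⟩^s}`. -/
noncomputable def gw {d : ℕ} (lam σ s : ℝ) (k : Fin d → ℤ) (η : Fin d → ℝ) : ℝ :=
  jb (znorm k + rnorm η) ^ σ * Real.exp (lam * jb (znorm k + rnorm η) ^ s)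

open scoped ENNReal

lemma jb_pos (x : ℝ) : 0 < jb x := Real.sqrt_pos.2 (by positivity)

lemma abs_le_jb (x : ℝ) : |x| ≤ jb x :=
  Real.abs_le_sqrt (by linarith)

lemma jb_mono {x y : ℝ} (hx : 0 ≤ x) (h : x ≤ y) : jb x ≤ jb y :=
  Real.sqrt_le_sqrt (by nlinarith)

lemma jb_abs (x : ℝ) : jb |x| = jb x := by
  rw [jb, jb, sq_abs]

lemma jb_add_le (x y : ℝ) : jb (x + y) ≤ jb x + jb y := by
  have hxy : x * y ≤ jb x * jb y :=
    (le_abs_self _).trans ((abs_mul x y).trans_le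
      (mul_le_mul (abs_le_jb x) (abs_le_jb y) (abs_nonneg y) (jb_pos x).le))
  have hx : jb x ^ 2 = 1 + x ^ 2 := Real.sq_sqrt (by positivity)
  have hy : jb y ^ 2 = 1 + y ^ 2 := Real.sq_sqrt (by positivity)
  rw [jb, Real.sqrt_le_left (add_nonneg (jb_pos x).le (jb_pos y).le)]
  nlinarith

lemma Real.rpow_add_le_two_rpow_mul_add {a b p : ℝ} (ha : 0 ≤ a) (hb : 0 ≤ b) (hp : 0 ≤ p) :
    (a + b) ^ p ≤ 2 ^ p * (a ^ p + b ^ p) := by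
  have hmax : (a + b) ^ p ≤ (2 * max a b) ^ p :=
    Real.rpow_le_rpow (by positivity) (by linarith [le_max_left a b, le_max_right a b]) hp
  rw [Real.mul_rpow zero_le_two (le_max_of_le_left ha)] at hmax
  refine hmax.trans (mul_le_mul_of_nonneg_left ?_ (by positivity))
  rcases le_total a b with h | h
  · rw [max_eq_right h]; linarith [Real.rpow_nonneg ha p]
  · rw [max_eq_left h]; linarith [Real.rpow_nonneg hb p]

lemma rnorm_nonneg {d : ℕ} (v : Fin d → ℝ) : 0 ≤ rnorm v :=
  Finset.sum_nonneg fun _ _ => abs_nonneg _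

lemma znorm_nonneg {d : ℕ} (k : Fin d → ℤ) : 0 ≤ znorm k :=
  Finset.sum_nonneg fun _ _ => abs_nonneg _

lemma rnorm_le_add_sub {d : ℕ} (v w : Fin d → ℝ) : rnorm v ≤ rnorm w + rnorm (v - w) := by
  rw [rnorm, rnorm, rnorm, ← Finset.sum_add_distrib]
  gcongr with i
  rw [Pi.sub_apply]
  linarith [abs_sub_abs_le_abs_sub (v i) (w i)]

lemma znorm_le_add_sub {d : ℕ} (k l : Fin d → ℤ) : znorm k ≤ znorm l + znorm (k - l) := by
  rw [znorm, znorm, znorm, ← Finset.sum_add_distrib]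
  gcongr with i
  rw [Pi.sub_apply, Int.cast_sub]
  linarith [abs_sub_abs_le_abs_sub (k i : ℝ) (l i)]

lemma gw_pos {d : ℕ} (lam σ s : ℝ) (k : Fin d → ℤ) (η : Fin d → ℝ) : 0 < gw lam σ s k η :=
  mul_pos (Real.rpow_pos_of_pos (jb_pos _) _) (Real.exp_pos _)

lemma summable_jb_int_rpow_neg {p : ℝ} (hp : 1 < p) : Summable fun n : ℤ => jb n ^ (-p) := by
  refine (Real.summable_abs_int_rpow hp).of_norm_bounded_eventually ?_
  filter_upwards [Set.Finite.compl_mem_cofinite (Set.finite_singleton (0 : ℤ))] with n hn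
  have hn0 : (0 : ℝ) < |(n : ℝ)| := by simpa using hn
  rw [Real.norm_of_nonneg (Real.rpow_nonneg (jb_pos _).le _)]
  exact Real.rpow_le_rpow_of_nonpos hn0 (abs_le_jb _) (by linarith)

lemma summable_pi_prod {ι κ : Type*} [Fintype ι] {u : κ → ℝ} (hu0 : ∀ j, 0 ≤ u j)
    (hu : Summable u) : Summable fun m : ι → κ => ∏ i, u (m i) := by
  classical
  refine summable_of_sum_le (c := (∑' j, u j) ^ Fintype.card ι)
    (fun m => Finset.prod_nonneg fun i _ => hu0 _) fun S => ?_
  calc ∑ m ∈ S, ∏ i, u (m i)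
      ≤ ∑ m ∈ Fintype.piFinset fun i => S.image (· i), ∏ i, u (m i) :=
        Finset.sum_le_sum_of_subset_of_nonneg
          (fun m hm => Fintype.mem_piFinset.2 fun i => Finset.mem_image_of_mem _ hm)
          (fun m _ _ => Finset.prod_nonneg fun i _ => hu0 _)
    _ = ∏ i, ∑ j ∈ S.image (· i), u j := (Finset.prod_univ_sum _ _).symm
    _ ≤ ∏ _i : ι, ∑' j, u j :=
        Finset.prod_le_prod (fun i _ => Finset.sum_nonneg fun j _ => hu0 j)
          (fun i _ => hu.sum_le_tsum _ fun j _ => hu0 j)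
    _ = (∑' j, u j) ^ Fintype.card ι := Finset.prod_const _

lemma jb_znorm_rpow_neg_le_prod {d : ℕ} (hd : d ≠ 0) {r : ℝ} (hr : 0 ≤ r) (m : Fin d → ℤ) :
    jb (znorm m) ^ (-r) ≤ ∏ i, jb (m i) ^ (-(r / d)) := by
  have hprod : ∏ i, jb (m i) ≤ jb (znorm m) ^ d := by
    calc ∏ i, jb (m i) ≤ ∏ _i : Fin d, jb (znorm m) :=
          Finset.prod_le_prod (fun i _ => (jb_pos _).le) fun i _ => by
            rw [← jb_abs]
            exact jb_mono (abs_nonneg _)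
              (Finset.single_le_sum (f := fun i => |(m i : ℝ)|) (fun _ _ => abs_nonneg _)
                (Finset.mem_univ i))
      _ = jb (znorm m) ^ d := by simp
  rw [Real.finsetProd_rpow _ _ fun i _ => (jb_pos _).le]
  calc jb (znorm m) ^ (-r) = (jb (znorm m) ^ d) ^ (-(r / d)) := by
        rw [← Real.rpow_natCast, ← Real.rpow_mul (jb_pos _).le]
        field_simp
    _ ≤ (∏ i, jb (m i)) ^ (-(r / d)) :=
        Real.rpow_le_rpow_of_nonpos (Finset.prod_pos fun i _ => jb_pos _) hprod
          (neg_nonpos.2 (by positivity))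

lemma summable_jb_znorm_rpow_neg {d : ℕ} {r : ℝ} (hr : (d : ℝ) < r) :
    Summable fun m : Fin d → ℤ => jb (znorm m) ^ (-r) := by
  rcases Nat.eq_zero_or_pos d with rfl | hd
  · have := Finite.of_subsingleton (α := Fin 0 → ℤ)
    exact Summable.of_finite
  have hd' : (0 : ℝ) < d := Nat.cast_pos.2 hd
  have hprod := summable_pi_prod (ι := Fin d) (fun j => (Real.rpow_pos_of_pos (jb_pos _) _).le)
    (summable_jb_int_rpow_neg ((one_lt_div hd').2 hr))
  exact Summable.of_nonneg_of_le (fun m => (Real.rpow_pos_of_pos (jb_pos _) _).le)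
    (jb_znorm_rpow_neg_le_prod hd.ne' (hd'.trans hr).le) hprod

lemma summable_sq_jb_znorm_rpow_neg {d : ℕ} {σ : ℝ} (hσ : (d : ℝ) / 2 < σ) :
    Summable fun m : Fin d → ℤ => (jb (znorm m) ^ (-σ)) ^ 2 := by
  refine (summable_jb_znorm_rpow_neg (r := 2 * σ) (by linarith)).congr fun m => ?_
  rw [← Real.rpow_natCast, ← Real.rpow_mul (jb_pos _).le]
  ring_nf

namespace ENNReal

lemma sum_mul_sq_le_sq_mul_sq {ι : Type*} (S : Finset ι) (f g : ι → ℝ≥0∞) :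
    (∑ i ∈ S, f i * g i) ^ 2 ≤ (∑ i ∈ S, f i ^ 2) * ∑ i ∈ S, g i ^ 2 := by
  have h := ENNReal.inner_le_Lp_mul_Lq S f g Real.HolderConjugate.two_two
  simp only [ENNReal.rpow_two] at h
  calc (∑ i ∈ S, f i * g i) ^ 2
      ≤ ((∑ i ∈ S, f i ^ 2) ^ (1 / 2 : ℝ) * (∑ i ∈ S, g i ^ 2) ^ (1 / 2 : ℝ)) ^ 2 := by gcongr
    _ = (∑ i ∈ S, f i ^ 2) * ∑ i ∈ S, g i ^ 2 := by
        rw [mul_pow, ← ENNReal.rpow_two, ← ENNReal.rpow_two, ← ENNReal.rpow_mul,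
          ← ENNReal.rpow_mul]
        norm_num

lemma tsum_mul_sq_le_sq_mul_sq {ι : Type*} (f g : ι → ℝ≥0∞) :
    (∑' i, f i * g i) ^ 2 ≤ (∑' i, f i ^ 2) * ∑' i, g i ^ 2 := by
  rw [ENNReal.tsum_eq_iSup_sum, ENNReal.iSup_pow]
  exact iSup_le fun S => (sum_mul_sq_le_sq_mul_sq S f g).trans
    (mul_le_mul' (ENNReal.sum_le_tsum S) (ENNReal.sum_le_tsum S))

lemma add_sq_le_two_mul (a b : ℝ≥0∞) : (a + b) ^ 2 ≤ 2 * (a ^ 2 + b ^ 2) := by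
  have h := ENNReal.rpow_add_le_mul_rpow_add_rpow a b one_le_two
  norm_num [ENNReal.rpow_two] at h
  exact h

end ENNReal

lemma tsum_add_sub_sq_le {K : Type*} [AddGroup K] (w : K → ℝ≥0∞) (k : K) :
    ∑' l, (w l + w (k - l)) ^ 2 ≤ 4 * ∑' m, w m ^ 2 := by
  calc ∑' l, (w l + w (k - l)) ^ 2 ≤ ∑' l, 2 * (w l ^ 2 + w (k - l) ^ 2) :=
        ENNReal.tsum_le_tsum fun l => ENNReal.add_sq_le_two_mul _ _
    _ = 2 * (∑' l, w l ^ 2 + ∑' l, w (k - l) ^ 2) := by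
        rw [ENNReal.tsum_mul_left, ENNReal.tsum_add]
    _ = 4 * ∑' m, w m ^ 2 := by
        rw [show ∑' l, w (k - l) ^ 2 = ∑' m, w m ^ 2 from
          (Equiv.subLeft k).tsum_eq fun m => w m ^ 2, ← two_mul, ← mul_assoc]
        norm_num

lemma tsum_lintegral_tsum_mul_shift {K E : Type*} [AddGroup K] [Countable K] [MeasurableSpace E]
    [AddGroup E] [MeasurableAdd E] {μ : Measure E} [μ.IsAddRightInvariant] (θ : K → E)
    (a : K → ℝ≥0∞) {G : K → E → ℝ≥0∞} (hG : ∀ m, AEMeasurable (G m) μ) :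
    ∑' k, ∫⁻ η, ∑' l, a l * G (k - l) (η - θ l) ∂μ = (∑' l, a l) * ∑' m, ∫⁻ ζ, G m ζ ∂μ := by
  have hshift : ∀ m l, AEMeasurable (fun η => G m (η - θ l)) μ := fun m l =>
    (hG m).comp_quasiMeasurePreserving (measurePreserving_sub_right μ (θ l)).quasiMeasurePreserving
  calc ∑' k, ∫⁻ η, ∑' l, a l * G (k - l) (η - θ l) ∂μ
      = ∑' k, ∑' l, a l * ∫⁻ ζ, G (k - l) ζ ∂μ := by
        refine tsum_congr fun k => ?_
        rw [lintegral_tsum fun l => (hshift _ l).const_mul _]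
        refine tsum_congr fun l => ?_
        rw [lintegral_const_mul'' _ (hshift _ l), lintegral_sub_right_eq_self (G (k - l)) (θ l)]
    _ = ∑' l, a l * ∑' m, ∫⁻ ζ, G m ζ ∂μ := by
        rw [ENNReal.tsum_comm]
        refine tsum_congr fun l => ?_
        rw [ENNReal.tsum_mul_left, show ∑' k, ∫⁻ ζ, G (k - l) ζ ∂μ = ∑' m, ∫⁻ ζ, G m ζ ∂μ from
          (Equiv.subRight l).tsum_eq fun m => ∫⁻ ζ, G m ζ ∂μ]
    _ = _ := ENNReal.tsum_mul_right

lemma ofReal_tsum_integral_le {ι α : Type*} [MeasurableSpace α] {μ : Measure α} {G : ι → α → ℝ}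
    (hG : ∀ i x, 0 ≤ G i x) :
    ENNReal.ofReal (∑' i, ∫ x, G i x ∂μ) ≤ ∑' i, ∫⁻ x, ENNReal.ofReal (G i x) ∂μ := by
  by_cases hs : Summable fun i => ∫ x, G i x ∂μ
  · rw [ENNReal.ofReal_tsum_of_nonneg (fun i => integral_nonneg (hG i)) hs]
    refine ENNReal.tsum_le_tsum fun i => ?_
    rw [← Real.enorm_of_nonneg (integral_nonneg (hG i))]
    refine (enorm_integral_le_lintegral_enorm _).trans_eq (lintegral_congr fun x => ?_)
    exact Real.enorm_of_nonneg (hG i x)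
  · simp [tsum_eq_zero_of_not_summable hs]

lemma ofReal_tsum_integral {ι α : Type*} [MeasurableSpace α] {μ : Measure α} {G : ι → α → ℝ}
    (hG : ∀ i x, 0 ≤ G i x) (hint : ∀ i, Integrable (G i) μ)
    (hsum : Summable fun i => ∫ x, G i x ∂μ) :
    ENNReal.ofReal (∑' i, ∫ x, G i x ∂μ) = ∑' i, ∫⁻ x, ENNReal.ofReal (G i x) ∂μ := by
  rw [ENNReal.ofReal_tsum_of_nonneg (fun i => integral_nonneg (hG i)) hsum]
  exact tsum_congr fun i => ofReal_integral_eq_lintegral_ofReal (hint i) (ae_of_all _ (hG i))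

lemma ofReal_sq_mul_sq {x y : ℝ} (hx : 0 ≤ x) (hy : 0 ≤ y) :
    ENNReal.ofReal (x ^ 2 * y ^ 2) = ENNReal.ofReal (x * y) ^ 2 := by
  rw [← mul_pow, ENNReal.ofReal_pow (mul_nonneg hx hy)]

noncomputable def decay {d : ℕ} (σ : ℝ) (m : Fin d → ℤ) : ℝ≥0∞ :=
  ENNReal.ofReal (jb (znorm m) ^ (-σ))

section Gevrey

variable {lam σ s : ℝ} {d : ℕ}

lemma rpow_mul_exp_le_of_le_add (hlam : 0 ≤ lam) (hσ : 0 ≤ σ) (hs0 : 0 ≤ s) (hs1 : s ≤ 1)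
    {X Y Z : ℝ} (hX : 0 ≤ X) (hY : 0 < Y) (hZ : 0 < Z) (h : X ≤ Y + Z) :
    X ^ σ * Real.exp (lam * X ^ s) ≤
      2 ^ σ * (Y ^ (-σ) + Z ^ (-σ)) *
        ((Y ^ σ * Real.exp (lam * Y ^ s)) * (Z ^ σ * Real.exp (lam * Z ^ s))) := by
  have hexp : Real.exp (lam * X ^ s) ≤ Real.exp (lam * Y ^ s) * Real.exp (lam * Z ^ s) := by
    rw [← Real.exp_add, ← mul_add]
    gcongr
    exact (Real.rpow_le_rpow hX h hs0).trans (Real.rpow_add_le_add_rpow hY.le hZ.le hs0 hs1)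
  have hpow : X ^ σ ≤ 2 ^ σ * (Y ^ (-σ) + Z ^ (-σ)) * (Y ^ σ * Z ^ σ) := by
    have hsplit : Y ^ σ + Z ^ σ = (Y ^ (-σ) + Z ^ (-σ)) * (Y ^ σ * Z ^ σ) := by
      rw [Real.rpow_neg hY.le, Real.rpow_neg hZ.le]
      field_simp
      ring
    calc X ^ σ ≤ (Y + Z) ^ σ := Real.rpow_le_rpow hX h hσ
      _ ≤ 2 ^ σ * (Y ^ σ + Z ^ σ) := Real.rpow_add_le_two_rpow_mul_add hY.le hZ.le hσ
      _ = _ := by rw [hsplit, mul_assoc]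
  calc X ^ σ * Real.exp (lam * X ^ s)
      ≤ (2 ^ σ * (Y ^ (-σ) + Z ^ (-σ)) * (Y ^ σ * Z ^ σ)) *
          (Real.exp (lam * Y ^ s) * Real.exp (lam * Z ^ s)) :=
        mul_le_mul hpow hexp (Real.exp_pos _).le (by positivity)
    _ = _ := by ring

lemma jb_znorm_add_rpow_neg_le (hσ : 0 ≤ σ) (k : Fin d → ℤ) (η : Fin d → ℝ) :
    jb (znorm k + rnorm η) ^ (-σ) ≤ jb (znorm k) ^ (-σ) :=
  Real.rpow_le_rpow_of_nonpos (jb_pos _)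
    (jb_mono (znorm_nonneg k) (le_add_of_nonneg_right (rnorm_nonneg η))) (neg_nonpos.2 hσ)

lemma gw_le_mul (hlam : 0 ≤ lam) (hσ : 0 ≤ σ) (hs0 : 0 ≤ s) (hs1 : s ≤ 1)
    {k l m : Fin d → ℤ} {η θ ζ : Fin d → ℝ}
    (h : znorm k + rnorm η ≤ (znorm l + rnorm θ) + (znorm m + rnorm ζ)) :
    gw lam σ s k η ≤
      2 ^ σ * (jb (znorm l) ^ (-σ) + jb (znorm m) ^ (-σ)) * (gw lam σ s l θ * gw lam σ s m ζ) := by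
  have hjb : jb (znorm k + rnorm η) ≤ jb (znorm l + rnorm θ) + jb (znorm m + rnorm ζ) :=
    (jb_mono (add_nonneg (znorm_nonneg k) (rnorm_nonneg η)) h).trans (jb_add_le _ _)
  refine (rpow_mul_exp_le_of_le_add hlam hσ hs0 hs1 (jb_pos _).le (jb_pos _) (jb_pos _) hjb).trans
    (mul_le_mul_of_nonneg_right (mul_le_mul_of_nonneg_left ?_ (by positivity))
      (mul_pos (gw_pos lam σ s l θ) (gw_pos lam σ s m ζ)).le)
  exact add_le_add (jb_znorm_add_rpow_neg_le hσ l θ) (jb_znorm_add_rpow_neg_le hσ m ζ)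

lemma ofReal_gw_mul_enorm_mul_le (hlam : 0 ≤ lam) (hσ : 0 ≤ σ) (hs0 : 0 ≤ s) (hs1 : s ≤ 1)
    (k l : Fin d → ℤ) (η θ : Fin d → ℝ) (a b : ℂ) :
    ENNReal.ofReal (gw lam σ s k η) * ‖a * b‖ₑ ≤
      ENNReal.ofReal (2 ^ σ) * ((decay σ l + decay σ (k - l)) *
        (ENNReal.ofReal (gw lam σ s l θ * ‖a‖) *
          ENNReal.ofReal (gw lam σ s (k - l) (η - θ) * ‖b‖))) := by
  have htri : znorm k + rnorm η ≤ (znorm l + rnorm θ) + (znorm (k - l) + rnorm (η - θ)) := by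
    linarith [znorm_le_add_sub k l, rnorm_le_add_sub η θ]
  rw [← ofReal_norm, ← ENNReal.ofReal_mul (gw_pos lam σ s k η).le, norm_mul, decay, decay]
  calc ENNReal.ofReal (gw lam σ s k η * (‖a‖ * ‖b‖))
      ≤ ENNReal.ofReal (2 ^ σ * ((jb (znorm l) ^ (-σ) + jb (znorm (k - l)) ^ (-σ)) *
          ((gw lam σ s l θ * ‖a‖) * (gw lam σ s (k - l) (η - θ) * ‖b‖)))) := by
        refine ENNReal.ofReal_le_ofReal ((mul_le_mul_of_nonneg_right
          (gw_le_mul hlam hσ hs0 hs1 htri) (by positivity)).trans_eq ?_)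
        ring
    _ = _ := by
        rw [ENNReal.ofReal_mul, ENNReal.ofReal_mul, ENNReal.ofReal_add, ENNReal.ofReal_mul]
        all_goals first | positivity | (simp only [gw, jb]; positivity)

lemma ofReal_gw_mul_norm_tsum_le (hlam : 0 ≤ lam) (hσ : 0 ≤ σ) (hs0 : 0 ≤ s) (hs1 : s ≤ 1)
    (θ : (Fin d → ℤ) → Fin d → ℝ) (f : (Fin d → ℤ) → (Fin d → ℝ) → ℂ) (h : (Fin d → ℤ) → ℂ)
    (k : Fin d → ℤ) (η : Fin d → ℝ) :
    ENNReal.ofReal (gw lam σ s k η * ‖∑' l, h l * f (k - l) (η - θ l)‖) ≤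
      ENNReal.ofReal (2 ^ σ) * ∑' l, (decay σ l + decay σ (k - l)) *
        (ENNReal.ofReal (gw lam σ s l (θ l) * ‖h l‖) *
          ENNReal.ofReal (gw lam σ s (k - l) (η - θ l) * ‖f (k - l) (η - θ l)‖)) := by
  calc ENNReal.ofReal (gw lam σ s k η * ‖∑' l, h l * f (k - l) (η - θ l)‖)
      = ENNReal.ofReal (gw lam σ s k η) * ‖∑' l, h l * f (k - l) (η - θ l)‖ₑ := by
        rw [ENNReal.ofReal_mul (gw_pos lam σ s k η).le, ofReal_norm]
    _ ≤ ENNReal.ofReal (gw lam σ s k η) * ∑' l, ‖h l * f (k - l) (η - θ l)‖ₑ := by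
        gcongr
        exact enorm_tsum_le_tsum_enorm
    _ ≤ _ := by
        rw [← ENNReal.tsum_mul_left, ← ENNReal.tsum_mul_left]
        exact ENNReal.tsum_le_tsum fun l =>
          ofReal_gw_mul_enorm_mul_le hlam hσ hs0 hs1 k l η (θ l) (h l) (f (k - l) (η - θ l))

theorem tsum_lintegral_gw_twisted_le (hlam : 0 ≤ lam) (hσ : 0 ≤ σ) (hs0 : 0 ≤ s) (hs1 : s ≤ 1)
    (θ : (Fin d → ℤ) → Fin d → ℝ) (f : (Fin d → ℤ) → (Fin d → ℝ) → ℂ) (h : (Fin d → ℤ) → ℂ)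
    (hf : ∀ m, AEMeasurable (fun ζ => ENNReal.ofReal (gw lam σ s m ζ ^ 2 * ‖f m ζ‖ ^ 2))) :
    ∑' k, ∫⁻ η, ENNReal.ofReal
        (gw lam σ s k η ^ 2 * ‖∑' l, h l * f (k - l) (η - θ l)‖ ^ 2) ≤
      4 * ENNReal.ofReal (2 ^ σ) ^ 2 * (∑' m : Fin d → ℤ, decay σ m ^ 2) *
        (∑' l, ENNReal.ofReal (gw lam σ s l (θ l) ^ 2 * ‖h l‖ ^ 2)) *
          ∑' m, ∫⁻ ζ, ENNReal.ofReal (gw lam σ s m ζ ^ 2 * ‖f m ζ‖ ^ 2) := by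
  have hgw : ∀ (m : Fin d → ℤ) ζ, 0 ≤ gw lam σ s m ζ := fun m ζ => (gw_pos lam σ s m ζ).le
  set c := ENNReal.ofReal (2 ^ σ)
  set W := ∑' m : Fin d → ℤ, decay σ m ^ 2
  set A : (Fin d → ℤ) → ℝ≥0∞ := fun l => ENNReal.ofReal (gw lam σ s l (θ l) * ‖h l‖)
  set F : (Fin d → ℤ) → (Fin d → ℝ) → ℝ≥0∞ := fun m ζ => ENNReal.ofReal (gw lam σ s m ζ * ‖f m ζ‖)
  have hF : ∀ m ζ, ENNReal.ofReal (gw lam σ s m ζ ^ 2 * ‖f m ζ‖ ^ 2) = F m ζ ^ 2 :=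
    fun m ζ => ofReal_sq_mul_sq (hgw m ζ) (norm_nonneg _)
  have hA : ∀ l, ENNReal.ofReal (gw lam σ s l (θ l) ^ 2 * ‖h l‖ ^ 2) = A l ^ 2 :=
    fun l => ofReal_sq_mul_sq (hgw l (θ l)) (norm_nonneg _)
  simp_rw [hF, hA] at hf ⊢
  calc ∑' k, ∫⁻ η, ENNReal.ofReal
          (gw lam σ s k η ^ 2 * ‖∑' l, h l * f (k - l) (η - θ l)‖ ^ 2)
      ≤ ∑' k, ∫⁻ η, (c * ∑' l, (decay σ l + decay σ (k - l)) *
          (A l * F (k - l) (η - θ l))) ^ 2 := by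
        gcongr with k η
        rw [ofReal_sq_mul_sq (hgw k η) (norm_nonneg _)]
        gcongr
        exact ofReal_gw_mul_norm_tsum_le hlam hσ hs0 hs1 θ f h k η
    _ ≤ ∑' k, ∫⁻ η, c ^ 2 * (4 * W) * ∑' l, A l ^ 2 * F (k - l) (η - θ l) ^ 2 := by
        gcongr with k η
        rw [mul_pow, mul_assoc]
        gcongr
        refine (ENNReal.tsum_mul_sq_le_sq_mul_sq _ _).trans ?_
        simp_rw [mul_pow]
        gcongr
        exact tsum_add_sub_sq_le _ k
    _ = c ^ 2 * (4 * W) * ∑' k, ∫⁻ η, ∑' l, A l ^ 2 * F (k - l) (η - θ l) ^ 2 := by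
        refine (tsum_congr fun k => lintegral_const_mul'' _ ?_).trans ENNReal.tsum_mul_left
        refine AEMeasurable.tsum fun l => ?_
        exact ((hf (k - l)).comp_quasiMeasurePreserving
          (measurePreserving_sub_right volume (θ l)).quasiMeasurePreserving).const_mul _
    _ = 4 * c ^ 2 * W * (∑' l, A l ^ 2) * ∑' m, ∫⁻ ζ, F m ζ ^ 2 := by
        rw [tsum_lintegral_tsum_mul_shift θ _ hf]
        ring

end Gevrey

theorem stmt_18_general (d : ℕ) (s lam σ : ℝ) (hs0 : 0 < s) (hs1 : s ≤ 1)
    (hlam : 0 < lam) (hσd : (d : ℝ) / 2 < σ) :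
    ∃ C : ℝ, 0 < C ∧
      ∀ (t : ℝ) (f : (Fin d → ℤ) → (Fin d → ℝ) → ℂ) (h : (Fin d → ℤ) → ℂ),
        (∀ k, Integrable (fun η : Fin d → ℝ => gw lam σ s k η ^ 2 * ‖f k η‖ ^ 2)) →
        Summable (fun k => ∫ η : Fin d → ℝ, gw lam σ s k η ^ 2 * ‖f k η‖ ^ 2) →
        Summable (fun k => gw lam σ s k (fun i => (k i : ℝ) * t) ^ 2 * ‖h k‖ ^ 2) →
        (∑' k : Fin d → ℤ, ∫ η : Fin d → ℝ,
            gw lam σ s k η ^ 2 *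
              ‖∑' ℓ : Fin d → ℤ, h ℓ * f (k - ℓ) (fun i => η i - (ℓ i : ℝ) * t)‖ ^ 2) ≤
          C * (∑' k : Fin d → ℤ, gw lam σ s k (fun i => (k i : ℝ) * t) ^ 2 * ‖h k‖ ^ 2) *
            (∑' k : Fin d → ℤ, ∫ η : Fin d → ℝ, gw lam σ s k η ^ 2 * ‖f k η‖ ^ 2) := by
  have hσ : 0 ≤ σ := (div_nonneg (Nat.cast_nonneg d) zero_le_two).trans hσd.le
  have hW := summable_sq_jb_znorm_rpow_neg hσd
  refine ⟨4 * (2 ^ σ) ^ 2 * ∑' m : Fin d → ℤ, (jb (znorm m) ^ (-σ)) ^ 2,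
    mul_pos (by positivity) (hW.tsum_pos (fun _ => sq_nonneg _) 0
      (pow_pos (Real.rpow_pos_of_pos (jb_pos _) _) 2)),
    fun t f h hInt hSumf hSumh => ?_⟩
  rw [← ENNReal.ofReal_le_ofReal_iff (by positivity)]
  refine (ofReal_tsum_integral_le fun k η => by positivity).trans
    ((tsum_lintegral_gw_twisted_le hlam.le hσ hs0.le hs1 (fun l i => (l i : ℝ) * t) f h
      fun m => (hInt m).aemeasurable.ennreal_ofReal).trans_eq ?_)
  rw [ENNReal.ofReal_mul (by positivity), ENNReal.ofReal_mul (by positivity),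
    ENNReal.ofReal_tsum_of_nonneg (fun k => by positivity) hSumh,
    ofReal_tsum_integral (fun k η => by positivity) hInt hSumf,
    ENNReal.ofReal_mul (by positivity), ENNReal.ofReal_tsum_of_nonneg (fun m => by positivity) hW,
    ENNReal.ofReal_mul zero_le_four, ENNReal.ofReal_pow (by positivity), ENNReal.ofReal_ofNat]
  simp only [decay, ENNReal.ofReal_pow (Real.rpow_nonneg (jb_pos _).le _)]

theorem stmt_18 (d : ℕ) (hd : 1 ≤ d) (s lam σ : ℝ) (hs0 : 0 < s) (hs1 : s ≤ 1)
    (hlam : 0 < lam) (hσ0 : 0 ≤ σ) (hσd : (d : ℝ) / 2 < σ) :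
    ∃ C : ℝ, 0 < C ∧
      ∀ (t : ℝ) (f : (Fin d → ℤ) → (Fin d → ℝ) → ℂ) (h : (Fin d → ℤ) → ℂ),
        (∀ k, Integrable (fun η : Fin d → ℝ => gw lam σ s k η ^ 2 * ‖f k η‖ ^ 2)) →
        Summable (fun k => ∫ η : Fin d → ℝ, gw lam σ s k η ^ 2 * ‖f k η‖ ^ 2) →
        Summable (fun k => gw lam σ s k (fun i => (k i : ℝ) * t) ^ 2 * ‖h k‖ ^ 2) →
        (∑' k : Fin d → ℤ, ∫ η : Fin d → ℝ,
            gw lam σ s k η ^ 2 *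
              ‖∑' ℓ : Fin d → ℤ, h ℓ * f (k - ℓ) (fun i => η i - (ℓ i : ℝ) * t)‖ ^ 2) ≤
          C * (∑' k : Fin d → ℤ, gw lam σ s k (fun i => (k i : ℝ) * t) ^ 2 * ‖h k‖ ^ 2) *
            (∑' k : Fin d → ℤ, ∫ η : Fin d → ℝ, gw lam σ s k η ^ 2 * ‖f k η‖ ^ 2) :=
  stmt_18_general d s lam σ hs0 hs1 hlam hσd
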